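/- arXiv:1402.6655 — 2 statements merged into one kernel-verified Lean document; each statement's English description precedes it below -/
import Mathlib

section
/- If f(x) = (1/2)x'Qx + q'x with Q symmetric positive semidefinite, μ_f = λ_min(Q), L_f = λ_max(Q), and γ ∈ (0, 1/L_f), then F_γ is strongly convex with modulus min{(1-γμ_f)μ_f, (1-γL_f)L_f} and ∇F_γ is Lipschitz continuous with constant 2(1-γμ_f)/γ. -/
open scoped RealInnerProductSpace
open Filter Topology

noncomputable section

abbrev Eucl (n : ℕ) := EuclideanSpace ℝ (Fin n)

/-- `p` is the proximal mapping of `g` with parameter `γ`: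
`p x` minimizes `u ↦ g u + ‖u - x‖² / (2γ)`. -/
def IsProx {n : ℕ} (γ : ℝ) (g : Eucl n → EReal) (p : Eucl n → Eucl n) : Prop :=
  ∀ x u, g (p x) + ((‖p x - x‖ ^ 2 / (2 * γ) : ℝ) : EReal)
        ≤ g u + ((‖u - x‖ ^ 2 / (2 * γ) : ℝ) : EReal)

/-- `g` is proper, lower semicontinuous and convex (with values in `ℝ ∪ {+∞}`). -/
def ProperLscConvex {n : ℕ} (g : Eucl n → EReal) : Prop :=
  (∃ x, g x ≠ ⊤) ∧ (∀ x, g x ≠ ⊥) ∧ LowerSemicontinuous g ∧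
  (∀ x y : Eucl n, ∀ a b : ℝ, 0 ≤ a → 0 ≤ b → a + b = 1 →
    g (a • x + b • y) ≤ (a : EReal) * g x + (b : EReal) * g y)

/-! The function splits as `F_γ = h + g^γ ∘ T` with `h = f - (γ/2)‖∇f‖²` quadratic and
`T x = x - γ ∇f x = S x - γ q`, where `S = I - γQ`. The Hessian of `h` is `Q S`, whose
eigenvalues `λ (1 - γλ)` are concave in `λ ∈ [μ, L]`, hence at least their minimum at the
endpoints; the Moreau envelope `g^γ` is convex, so `F_γ` is strongly convex. The envelope is differentiable with gradient
`(y - prox y)/γ`, so `∇F_γ x = γ⁻¹ S (x - prox (T x))`; as `prox` is nonexpansive and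
`‖S‖ ≤ 1 - γμ`, this gradient is `2(1 - γμ)/γ`-Lipschitz. -/

open Set

section InnerProductSpace

variable {E : Type*} [NormedAddCommGroup E] [InnerProductSpace ℝ E]

namespace LinearMap.IsSymmetric

variable {B : E →ₗ[ℝ] E}

theorem inner_map_smul_add_smul (hB : B.IsSymmetric) (x y : E) {a b : ℝ} (hab : a + b = 1) :
    ⟪B (a • x + b • y), a • x + b • y⟫
      = a * ⟪B x, x⟫ + b * ⟪B y, y⟫ - a * b * ⟪B (x - y), x - y⟫ := by
  obtain rfl : b = 1 - a := by linarith
  have hxy : ⟪B y, x⟫ = ⟪B x, y⟫ := by rw [hB, real_inner_comm]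
  simp only [map_add, map_sub, map_smul, inner_add_left, inner_add_right, inner_sub_left,
    inner_sub_right, real_inner_smul_left, real_inner_smul_right, hxy]
  ring

theorem sq_norm_apply_le (hB : B.IsSymmetric) (h0 : ∀ x, 0 ≤ ⟪B x, x⟫) {M : ℝ}
    (hM : ∀ x, ⟪B x, x⟫ ≤ M * ‖x‖ ^ 2) (x : E) : ‖B x‖ ^ 2 ≤ M * ⟪B x, x⟫ := by
  have hcs := LinearMap.BilinForm.apply_mul_apply_le_of_forall_zero_le
    ((innerₗ E).comp B) h0 x (B x)
  simp only [LinearMap.comp_apply, innerₗ_apply_apply, hB (B x) x,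
    real_inner_self_eq_norm_sq] at hcs
  rcases (norm_nonneg (B x)).eq_or_lt with hBx | hBx
  · simp [norm_eq_zero.mp hBx.symm]
  · refine le_of_mul_le_mul_right (hcs.trans ?_) (pow_pos hBx 2)
    rw [mul_assoc, mul_left_comm]
    exact mul_le_mul_of_nonneg_left (hM (B x)) (h0 x)

theorem norm_apply_le (hB : B.IsSymmetric) (h0 : ∀ x, 0 ≤ ⟪B x, x⟫) {M : ℝ}
    (hM : ∀ x, ⟪B x, x⟫ ≤ M * ‖x‖ ^ 2) (x : E) : ‖B x‖ ≤ M * ‖x‖ := by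
  rcases eq_or_ne x 0 with rfl | hx
  · simp
  have hM0 : 0 ≤ M := nonneg_of_mul_nonneg_left ((h0 x).trans (hM x)) (by positivity)
  refine le_of_sq_le_sq ?_ (by positivity)
  calc ‖B x‖ ^ 2 ≤ M * ⟪B x, x⟫ := hB.sq_norm_apply_le h0 hM x
    _ ≤ M * (M * ‖x‖ ^ 2) := mul_le_mul_of_nonneg_left (hM x) hM0
    _ = (M * ‖x‖) ^ 2 := by ring

/-- The spectral bound `λ (1 - γ λ) ≥ min` of its values at `λ = μ, L`, obtained without the
spectral theorem from `sq_norm_apply_le` for the positive operator `B - μ`. -/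
theorem min_mul_sq_norm_le_inner_sub {μ L γ : ℝ} (hB : B.IsSymmetric)
    (hμ : ∀ x, μ * ‖x‖ ^ 2 ≤ ⟪B x, x⟫) (hL : ∀ x, ⟪B x, x⟫ ≤ L * ‖x‖ ^ 2) (hγ : 0 ≤ γ) (x : E) :
    min ((1 - γ * μ) * μ) ((1 - γ * L) * L) * ‖x‖ ^ 2 ≤ ⟪B x, x⟫ - γ * ‖B x‖ ^ 2 := by
  set A : E →ₗ[ℝ] E := B - μ • LinearMap.id
  have hA : A.IsSymmetric := hB.sub (LinearMap.IsSymmetric.id.smul rfl)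
  have hAy : ∀ y, A y = B y - μ • y := fun y => rfl
  have hAx : ∀ y, ⟪A y, y⟫ = ⟪B y, y⟫ - μ * ‖y‖ ^ 2 := fun y => by
    rw [hAy, inner_sub_left, real_inner_smul_left, real_inner_self_eq_norm_sq]
  have hcs := hA.sq_norm_apply_le (M := L - μ) (fun y => by linarith [hAx y, hμ y])
    (fun y => by linarith [hAx y, hL y]) x
  rw [hAx, hAy, norm_sub_sq_real,
    real_inner_smul_right, norm_smul, Real.norm_eq_abs, mul_pow, sq_abs] at hcs
  have hBx : ‖B x‖ ^ 2 ≤ (L + μ) * ⟪B x, x⟫ - μ * L * ‖x‖ ^ 2 := by nlinarith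
  have hγB := mul_le_mul_of_nonneg_left hBx hγ
  rcases le_total (γ * (μ + L)) 1 with h | h
  · have := mul_nonneg (sub_nonneg.2 h) (sub_nonneg.2 (hμ x))
    have := mul_le_mul_of_nonneg_right (min_le_left ((1 - γ * μ) * μ) ((1 - γ * L) * L))
      (sq_nonneg ‖x‖)
    nlinarith
  · have := mul_nonneg (sub_nonneg.2 h) (sub_nonneg.2 (hL x))
    have := mul_le_mul_of_nonneg_right (min_le_right ((1 - γ * μ) * μ) ((1 - γ * L) * L))
      (sq_nonneg ‖x‖)
    nlinarith

theorem norm_sub_smul_apply_le {μ L γ : ℝ} (hB : B.IsSymmetric)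
    (hμ : ∀ x, μ * ‖x‖ ^ 2 ≤ ⟪B x, x⟫) (hL : ∀ x, ⟪B x, x⟫ ≤ L * ‖x‖ ^ 2) (hγ : 0 ≤ γ)
    (hγL : γ * L ≤ 1) (x : E) : ‖x - γ • B x‖ ≤ (1 - γ * μ) * ‖x‖ := by
  set A : E →ₗ[ℝ] E := LinearMap.id - γ • B
  have hA : A.IsSymmetric := LinearMap.IsSymmetric.id.sub (hB.smul rfl)
  have hAx : ∀ y, ⟪A y, y⟫ = ‖y‖ ^ 2 - γ * ⟪B y, y⟫ := fun y => by
    rw [show A y = y - γ • B y from rfl, inner_sub_left, real_inner_smul_left,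
      real_inner_self_eq_norm_sq]
  refine hA.norm_apply_le (fun y => ?_) (fun y => ?_) x
  · rw [hAx]
    nlinarith [mul_le_mul_of_nonneg_left (hL y) hγ, sq_nonneg ‖y‖]
  · rw [hAx]
    nlinarith [mul_le_mul_of_nonneg_left (hμ y) hγ]

end LinearMap.IsSymmetric

theorem norm_smul_add_smul_sq (x y : E) {a b : ℝ} (hab : a + b = 1) :
    ‖a • x + b • y‖ ^ 2 = a * ‖x‖ ^ 2 + b * ‖y‖ ^ 2 - a * b * ‖x - y‖ ^ 2 := by
  simpa only [LinearMap.id_apply, real_inner_self_eq_norm_sq] using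
    LinearMap.IsSymmetric.id.inner_map_smul_add_smul x y hab

theorem StrongConvexOn.add_convexOn {s : Set E} {m : ℝ} {f g : E → ℝ}
    (hf : StrongConvexOn s m f) (hg : ConvexOn ℝ s g) : StrongConvexOn s m (f + g) := by
  have := hf.add (uniformConvexOn_zero.2 hg)
  rwa [add_zero] at this

theorem convexOn_univ_of_le_add_inner {f : E → ℝ} (v : E → E)
    (hv : ∀ y z, f y + ⟪v y, z - y⟫ ≤ f z) : ConvexOn ℝ univ f := by
  refine ⟨convex_univ, fun x _ y _ a b ha hb hab => ?_⟩
  have hx := mul_le_mul_of_nonneg_left (hv (a • x + b • y) x) ha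
  have hy := mul_le_mul_of_nonneg_left (hv (a • x + b • y) y) hb
  have hsum : a • (x - (a • x + b • y)) + b • (y - (a • x + b • y)) = 0 := by
    obtain rfl : b = 1 - a := by linarith
    module
  have hw := congrArg (⟪v (a • x + b • y), ·⟫) hsum
  simp only [inner_add_right, real_inner_smul_right, inner_zero_right] at hw
  simp only [smul_eq_mul]
  linear_combination hx + hy - f (a • x + b • y) * hab - hw

theorem ConvexOn.comp_of_map_sub {f : E → ℝ} (hf : ConvexOn ℝ univ f) {T : E → E}
    (S : E →ₗ[ℝ] E) (hT : ∀ x y, T x - T y = S (x - y)) : ConvexOn ℝ univ (f ∘ T) :=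
  hf.comp_affineMap ⟨T, S, fun x v => by simpa [sub_eq_iff_eq_add] using hT (v +ᵥ x) x⟩

theorem strongConvexOn_quadratic_sub_sq_norm_gradient {Q : E →L[ℝ] E}
    (hQ : (Q : E →ₗ[ℝ] E).IsSymmetric) (q : E) {γ m : ℝ}
    (hm : ∀ x, m * ‖x‖ ^ 2 ≤ ⟪Q x, x⟫ - γ * ‖Q x‖ ^ 2) :
    StrongConvexOn univ m
      (fun x => ((1 : ℝ) / 2 * ⟪x, Q x⟫ + ⟪q, x⟫) - γ / 2 * ‖Q x + q‖ ^ 2) := by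
  refine ⟨convex_univ, fun x _ y _ a b ha hb hab => ?_⟩
  have hquad := hQ.inner_map_smul_add_smul x y hab
  simp only [ContinuousLinearMap.coe_coe] at hquad
  have hgrad : Q (a • x + b • y) + q = a • (Q x + q) + b • (Q y + q) := by
    rw [map_add, map_smul, map_smul, smul_add, smul_add, add_add_add_comm, ← add_smul, hab,
      one_smul]
  have hlin : ⟪q, a • x + b • y⟫ = a * ⟪q, x⟫ + b * ⟪q, y⟫ := by
    rw [inner_add_right, real_inner_smul_right, real_inner_smul_right]
  have hm' := mul_le_mul_of_nonneg_left (hm (x - y)) (mul_nonneg ha hb)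
  simp only [smul_eq_mul]
  rw [real_inner_comm (Q _), real_inner_comm (Q x), real_inner_comm (Q y), hgrad,
    norm_smul_add_smul_sq _ _ hab, hlin, add_sub_add_right_eq_sub, ← map_sub]
  linarith

section Gradient

variable [CompleteSpace E]

theorem hasGradientAt_of_le_of_le {G : E → ℝ} {v y : E} {C : ℝ}
    (hlow : ∀ z, G y + ⟪v, z - y⟫ ≤ G z)
    (hup : ∀ z, G z ≤ G y + ⟪v, z - y⟫ + C * ‖z - y‖ ^ 2) : HasGradientAt G v y := by
  rw [hasGradientAt_iff_isLittleO]
  refine (Asymptotics.IsBigO.of_bound C (Eventually.of_forall fun z => ?_)).trans_isLittleO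
    (Asymptotics.isLittleO_pow_sub_sub y one_lt_two)
  rw [Real.norm_of_nonneg (by linarith [hlow z]), norm_pow, norm_norm]
  linarith [hup z]

theorem HasGradientAt.add {f g : E → ℝ} {f' g' x : E} (hf : HasGradientAt f f' x)
    (hg : HasGradientAt g g' x) : HasGradientAt (fun y => f y + g y) (f' + g') x := by
  rw [hasGradientAt_iff_hasFDerivAt, map_add]
  exact (hasGradientAt_iff_hasFDerivAt.1 hf).add (hasGradientAt_iff_hasFDerivAt.1 hg)

theorem HasGradientAt.comp_of_map_sub {G : E → ℝ} {T : E → E} {S : E →L[ℝ] E} {v x : E}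
    (hG : HasGradientAt G v (T x)) (hS : (S : E →ₗ[ℝ] E).IsSymmetric)
    (hT : ∀ x y, T x - T y = S (x - y)) : HasGradientAt (G ∘ T) (S v) x := by
  have hT' : T = fun z => S z + T 0 :=
    funext fun z => by simpa [sub_eq_iff_eq_add] using hT z 0
  have hTd : HasFDerivAt T S x := hT' ▸ S.hasFDerivAt.add_const (T 0)
  rw [hasGradientAt_iff_hasFDerivAt]
  refine ((hasGradientAt_iff_hasFDerivAt.1 hG).comp x hTd).congr_fderiv ?_
  ext w
  simp [hS.apply_clm]

theorem hasGradientAt_quadratic_sub_sq_norm_gradient {Q : E →L[ℝ] E}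
    (hQ : (Q : E →ₗ[ℝ] E).IsSymmetric) (q : E) (γ : ℝ) (x : E) :
    HasGradientAt (fun x => ((1 : ℝ) / 2 * ⟪x, Q x⟫ + ⟪q, x⟫) - γ / 2 * ‖Q x + q‖ ^ 2)
      ((ContinuousLinearMap.id ℝ E - γ • Q) (Q x + q)) x := by
  have h1 := (hasFDerivAt_id x).inner ℝ Q.hasFDerivAt
  have h2 := (hasFDerivAt_const q x).inner ℝ (hasFDerivAt_id x)
  have h3 := (Q.hasFDerivAt (x := x)).add_const q |>.norm_sq
  rw [hasGradientAt_iff_hasFDerivAt]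
  refine (((h1.const_mul ((1 : ℝ) / 2)).add h2).sub (h3.const_mul (γ / 2))).congr_fderiv ?_
  ext w
  simp only [one_div, id_eq, map_add, ContinuousLinearMap.add_comp, smul_add, two_smul, sub_apply,
    add_apply, smul_apply, ContinuousLinearMap.comp_apply, ContinuousLinearMap.prod_apply,
    ContinuousLinearMap.id_apply, fderivInnerCLM_apply, smul_eq_mul, zero_apply, inner_zero_left,
    add_zero, coe_innerSL_apply, map_sub, map_smul, InnerProductSpace.toDual_apply_apply]
  have e1 : ⟪x, Q w⟫ = ⟪Q x, w⟫ := (hQ x w).symm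
  have e2 : ⟪w, Q x⟫ = ⟪Q x, w⟫ := real_inner_comm _ _
  have e3 : ⟪Q x, Q w⟫ = ⟪Q (Q x), w⟫ := (hQ.apply_clm _ _).symm
  have e4 : ⟪q, Q w⟫ = ⟪Q q, w⟫ := (hQ.apply_clm _ _).symm
  linear_combination (1 / 2) * e1 + (1 / 2) * e2 - γ * e3 - γ * e4

end Gradient

theorem lipschitzWith_inv_smul_apply_sub_comp {S : E →L[ℝ] E} {K c : ℝ}
    (hS : ∀ d, ‖S d‖ ≤ K * ‖d‖) (hK : K ≤ 1) (hc : 0 < c) {P T : E → E}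
    (hP : LipschitzWith 1 P) (hT : ∀ x y, T x - T y = S (x - y)) :
    LipschitzWith (2 * K / c).toNNReal (fun x => c⁻¹ • S (x - P (T x))) := by
  refine LipschitzWith.of_dist_le' fun x y => ?_
  have hP' : ‖P (T x) - P (T y)‖ ≤ ‖S (x - y)‖ := by
    simpa [hT] using hP.norm_sub_le (T x) (T y)
  have hw : ‖x - P (T x) - (y - P (T y))‖ ≤ 2 * ‖x - y‖ := calc
    ‖x - P (T x) - (y - P (T y))‖ = ‖(x - y) - (P (T x) - P (T y))‖ := by congr 1; abel
    _ ≤ ‖x - y‖ + ‖S (x - y)‖ := (norm_sub_le _ _).trans (by linarith)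
    _ ≤ 2 * ‖x - y‖ := by nlinarith [hS (x - y), norm_nonneg (x - y)]
  rw [dist_eq_norm, dist_eq_norm, ← smul_sub, ← map_sub, norm_smul, norm_inv,
    Real.norm_of_nonneg hc.le]
  rcases le_or_gt 0 K with hK0 | hK0
  · calc c⁻¹ * ‖S (x - P (T x) - (y - P (T y)))‖
        ≤ c⁻¹ * (K * (2 * ‖x - y‖)) := by
          gcongr
          exact (hS _).trans (mul_le_mul_of_nonneg_left hw hK0)
      _ = 2 * K / c * ‖x - y‖ := by ring
  · -- a negative bound in `hS` forces the space to be trivial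
    have hxy : ‖x - y‖ = 0 := by
      nlinarith [norm_nonneg (S (x - y)), hS (x - y), norm_nonneg (x - y)]
    have := (hS (x - P (T x) - (y - P (T y)))).trans
      (mul_nonpos_of_nonpos_of_nonneg hK0.le (norm_nonneg _))
    rw [hxy, mul_zero]
    exact mul_nonpos_of_nonneg_of_nonpos (by positivity) this

end InnerProductSpace

/-- For a proximal map `p` of `g`, this is the Moreau envelope `g^γ`
(the `toReal` is harmless because `g ∘ p` is finite for proper `g`). -/
def moreauEnv {n : ℕ} (γ : ℝ) (g : Eucl n → EReal) (p : Eucl n → Eucl n) (y : Eucl n) : ℝ :=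
  (g (p y)).toReal + ‖p y - y‖ ^ 2 / (2 * γ)

section Prox

variable {n : ℕ} {γ : ℝ} {g : Eucl n → EReal} {p : Eucl n → Eucl n}

theorem ProperLscConvex.toReal_smul_add_smul_le (hg : ProperLscConvex g) {x y : Eucl n}
    (hx : g x ≠ ⊤) (hy : g y ≠ ⊤) {a b : ℝ} (ha : 0 ≤ a) (hb : 0 ≤ b) (hab : a + b = 1) :
    g (a • x + b • y) ≠ ⊤ ∧
      (g (a • x + b • y)).toReal ≤ a * (g x).toReal + b * (g y).toReal := by
  have h := hg.2.2.2 x y a b ha hb hab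
  rw [← EReal.coe_toReal hx (hg.2.1 x), ← EReal.coe_toReal hy (hg.2.1 y), ← EReal.coe_mul,
    ← EReal.coe_mul, ← EReal.coe_add] at h
  have hne : g (a • x + b • y) ≠ ⊤ := ne_top_of_le_ne_top (EReal.coe_ne_top _) h
  exact ⟨hne, EReal.toReal_le_toReal h (hg.2.1 _) (EReal.coe_ne_top _)⟩

theorem IsProx.apply_ne_top (hp : IsProx γ g p) (hg : ProperLscConvex g) (y : Eucl n) :
    g (p y) ≠ ⊤ := by
  obtain ⟨u, hu⟩ := hg.1
  intro htop
  have h := hp y u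
  rw [htop, EReal.top_add_coe, top_le_iff] at h
  exact (EReal.add_lt_top hu (EReal.coe_ne_top _)).ne h

theorem IsProx.moreauEnv_le (hp : IsProx γ g p) (hg : ProperLscConvex g) (y : Eucl n)
    {u : Eucl n} (hu : g u ≠ ⊤) : moreauEnv γ g p y ≤ (g u).toReal + ‖u - y‖ ^ 2 / (2 * γ) := by
  have h := hp y u
  rw [← EReal.coe_toReal (hp.apply_ne_top hg y) (hg.2.1 _), ← EReal.coe_toReal hu (hg.2.1 u),
    ← EReal.coe_add, ← EReal.coe_add] at h
  exact EReal.coe_le_coe_iff.1 h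

/-- Optimality of `p y` against the point `(1 - t) • p y + t • u`, divided by `t`. -/
theorem IsProx.nonneg_along_segment (hp : IsProx γ g p) (hg : ProperLscConvex g) (hγ : 0 < γ)
    (y : Eucl n) {u : Eucl n} (hu : g u ≠ ⊤) {t : ℝ} (ht₀ : 0 < t) (ht₁ : t ≤ 1) :
    0 ≤ (g u).toReal - (g (p y)).toReal + ⟪p y - y, u - p y⟫ / γ
      + t * (‖u - p y‖ ^ 2 / (2 * γ)) := by
  have hconv := hg.toReal_smul_add_smul_le (hp.apply_ne_top hg y) hu (sub_nonneg.2 ht₁)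
    ht₀.le (sub_add_cancel 1 t)
  have hle := hp.moreauEnv_le hg y hconv.1
  have hsq : ‖(1 - t) • p y + t • u - y‖ ^ 2
      = ‖p y - y‖ ^ 2 + 2 * t * ⟪p y - y, u - p y⟫ + t ^ 2 * ‖u - p y‖ ^ 2 := by
    rw [show (1 - t) • p y + t • u - y = (p y - y) + t • (u - p y) by module, norm_add_sq_real,
      real_inner_smul_right, norm_smul, Real.norm_of_nonneg ht₀.le]
    ring
  rw [moreauEnv, hsq, add_div, add_div] at hle
  refine nonneg_of_mul_nonneg_right ?_ ht₀
  have hexp : t * ((g u).toReal - (g (p y)).toReal + ⟪p y - y, u - p y⟫ / γ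
      + t * (‖u - p y‖ ^ 2 / (2 * γ))) = t * ((g u).toReal - (g (p y)).toReal)
        + 2 * t * ⟪p y - y, u - p y⟫ / (2 * γ) + t ^ 2 * ‖u - p y‖ ^ 2 / (2 * γ) := by
    field_simp
  linarith [hconv.2]

theorem IsProx.inner_sub_le (hp : IsProx γ g p) (hg : ProperLscConvex g) (hγ : 0 < γ)
    (y : Eucl n) {u : Eucl n} (hu : g u ≠ ⊤) :
    ⟪y - p y, u - p y⟫ ≤ γ * ((g u).toReal - (g (p y)).toReal) := by
  set C := (g u).toReal - (g (p y)).toReal + ⟪p y - y, u - p y⟫ / γ with hCdef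
  set D := ‖u - p y‖ ^ 2 / (2 * γ)
  have hlim : Tendsto (fun t => C + t * D) (𝓝[>] 0) (𝓝 C) :=
    ((by fun_prop : Continuous fun t : ℝ => C + t * D).tendsto' 0 C (by simp)).mono_left
      nhdsWithin_le_nhds
  have hC : 0 ≤ C := ge_of_tendsto hlim <| mem_of_superset (Ioc_mem_nhdsGT one_pos)
    fun t ht => hp.nonneg_along_segment hg hγ y hu ht.1 ht.2
  have hγC : γ * C = γ * ((g u).toReal - (g (p y)).toReal) - ⟪y - p y, u - p y⟫ := by
    rw [hCdef, show y - p y = -(p y - y) by abel, inner_neg_left]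
    field_simp
    ring
  nlinarith [mul_nonneg hγ.le hC]

theorem IsProx.sq_norm_sub_le_inner (hp : IsProx γ g p) (hg : ProperLscConvex g) (hγ : 0 < γ)
    (y z : Eucl n) : ‖p y - p z‖ ^ 2 ≤ ⟪y - z, p y - p z⟫ := by
  have hy := hp.inner_sub_le hg hγ y (hp.apply_ne_top hg z)
  have hz := hp.inner_sub_le hg hγ z (hp.apply_ne_top hg y)
  have hsum : ⟪y - z, p y - p z⟫ - ‖p y - p z‖ ^ 2
      = -⟪y - p y, p z - p y⟫ - ⟪z - p z, p y - p z⟫ := by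
    rw [← real_inner_self_eq_norm_sq]
    simp only [inner_sub_left, inner_sub_right, real_inner_comm]
    ring
  linarith

theorem IsProx.lipschitzWith_one (hp : IsProx γ g p) (hg : ProperLscConvex g) (hγ : 0 < γ) :
    LipschitzWith 1 p := by
  refine LipschitzWith.of_dist_le_mul fun y z => ?_
  rw [NNReal.coe_one, one_mul, dist_eq_norm, dist_eq_norm]
  have h := (hp.sq_norm_sub_le_inner hg hγ y z).trans (real_inner_le_norm _ _)
  rcases (norm_nonneg (p y - p z)).eq_or_lt with h0 | h0
  · rw [← h0]; exact norm_nonneg _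
  · nlinarith

theorem IsProx.moreauEnv_le_add_inner (hp : IsProx γ g p) (hg : ProperLscConvex g)
    (y z : Eucl n) :
    moreauEnv γ g p z
      ≤ moreauEnv γ g p y + ⟪γ⁻¹ • (y - p y), z - y⟫ + (2 * γ)⁻¹ * ‖z - y‖ ^ 2 :=
  calc moreauEnv γ g p z ≤ (g (p y)).toReal + ‖p y - z‖ ^ 2 / (2 * γ) :=
        hp.moreauEnv_le hg z (hp.apply_ne_top hg y)
    _ = _ := by
      rw [moreauEnv, show p y - z = (p y - y) - (z - y) by abel, norm_sub_sq_real,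
        real_inner_smul_left, ← neg_sub (p y) y, inner_neg_left]
      ring

theorem IsProx.add_inner_le_moreauEnv (hp : IsProx γ g p) (hg : ProperLscConvex g)
    (hγ : 0 < γ) (y z : Eucl n) :
    moreauEnv γ g p y + ⟪γ⁻¹ • (y - p y), z - y⟫ ≤ moreauEnv γ g p z := by
  have h := hp.inner_sub_le hg hγ y (hp.apply_ne_top hg z)
  rw [show p z - p y = (z - y) + ((y - p y) - (z - p z)) by abel, inner_add_right,
    inner_sub_right (y - p y) (y - p y), real_inner_self_eq_norm_sq] at h
  have hgap := sq_nonneg ‖(y - p y) - (z - p z)‖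
  rw [norm_sub_sq_real] at hgap
  rw [moreauEnv, moreauEnv, real_inner_smul_left, norm_sub_rev (p y), norm_sub_rev (p z)]
  field_simp
  linarith

theorem IsProx.hasGradientAt_moreauEnv (hp : IsProx γ g p) (hg : ProperLscConvex g)
    (hγ : 0 < γ) (y : Eucl n) : HasGradientAt (moreauEnv γ g p) (γ⁻¹ • (y - p y)) y :=
  hasGradientAt_of_le_of_le (hp.add_inner_le_moreauEnv hg hγ y) (hp.moreauEnv_le_add_inner hg y)

theorem IsProx.convexOn_moreauEnv (hp : IsProx γ g p) (hg : ProperLscConvex g) (hγ : 0 < γ) :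
    ConvexOn ℝ univ (moreauEnv γ g p) :=
  convexOn_univ_of_le_add_inner _ (hp.add_inner_le_moreauEnv hg hγ)

end Prox

theorem fbe_quadratic_strongly_convex_general {n : ℕ}
    (Q : Eucl n →L[ℝ] Eucl n) (q : Eucl n) (μ L : ℝ)
    (g : Eucl n → EReal) (γ : ℝ) (p : Eucl n → Eucl n)
    (hQsymm : ∀ u v : Eucl n, ⟪Q u, v⟫ = ⟪u, Q v⟫)
    (hμ0 : 0 ≤ μ)
    (hμ : ∀ x : Eucl n, μ * ‖x‖ ^ 2 ≤ ⟪Q x, x⟫)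
    (hL : ∀ x : Eucl n, ⟪Q x, x⟫ ≤ L * ‖x‖ ^ 2)
    (hg : ProperLscConvex g)
    (hγ : 0 < γ) (hγL : γ < 1 / L)
    (hp : IsProx γ g p) :
    -- with `f x = ½⟪x,Qx⟫ + ⟪q,x⟫`, `∇f x = Q x + q` and
    -- `F_γ x = f x - (γ/2)‖∇f x‖² + g^γ(x - γ∇f x)`:
    StrongConvexOn Set.univ (min ((1 - γ * μ) * μ) ((1 - γ * L) * L))
      (fun x : Eucl n =>
        ((1 : ℝ) / 2 * ⟪x, Q x⟫ + ⟪q, x⟫) - γ / 2 * ‖Q x + q‖ ^ 2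
          + ((g (p (x - γ • (Q x + q)))).toReal
              + ‖p (x - γ • (Q x + q)) - (x - γ • (Q x + q))‖ ^ 2 / (2 * γ))) ∧
    ∃ Fγ' : Eucl n → Eucl n,
      (∀ x : Eucl n, HasGradientAt
        (fun x : Eucl n =>
          ((1 : ℝ) / 2 * ⟪x, Q x⟫ + ⟪q, x⟫) - γ / 2 * ‖Q x + q‖ ^ 2
            + ((g (p (x - γ • (Q x + q)))).toReal
                + ‖p (x - γ • (Q x + q)) - (x - γ • (Q x + q))‖ ^ 2 / (2 * γ)))
        (Fγ' x) x) ∧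
      LipschitzWith (2 * (1 - γ * μ) / γ).toNNReal Fγ' := by
  have hQ : (Q : Eucl n →ₗ[ℝ] Eucl n).IsSymmetric := hQsymm
  have hγL' : γ * L ≤ 1 := by
    rcases le_or_gt L 0 with hL0 | hL0
    · nlinarith
    · exact ((lt_div_iff₀ hL0).1 (by simpa using hγL)).le
  set S := ContinuousLinearMap.id ℝ (Eucl n) - γ • Q
  have hS : (S : Eucl n →ₗ[ℝ] Eucl n).IsSymmetric := fun u v => by
    simp [S, inner_sub_left, inner_sub_right, real_inner_smul_left, real_inner_smul_right,
      hQsymm]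
  have hT : ∀ x y, (x - γ • (Q x + q)) - (y - γ • (Q y + q)) = S (x - y) := fun x y => by
    simp only [S, sub_apply, ContinuousLinearMap.id_apply, smul_apply, map_sub]
    module
  refine ⟨?_, fun x => γ⁻¹ • S (x - p (x - γ • (Q x + q))), fun x => ?_, ?_⟩
  · exact (strongConvexOn_quadratic_sub_sq_norm_gradient hQ q
      (hQ.min_mul_sq_norm_le_inner_sub hμ hL hγ.le)).add_convexOn
      ((hp.convexOn_moreauEnv hg hγ).comp_of_map_sub S hT)
  · have hsplit : x - p (x - γ • (Q x + q))
        = γ • (Q x + q) + (x - γ • (Q x + q) - p (x - γ • (Q x + q))) := by abel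
    beta_reduce
    rw [hsplit, map_add, map_smul, smul_add, smul_smul, inv_mul_cancel₀ hγ.ne', one_smul,
      ← map_smul]
    exact (hasGradientAt_quadratic_sub_sq_norm_gradient hQ q γ x).add
      ((hp.hasGradientAt_moreauEnv hg hγ _).comp_of_map_sub hS hT)
  · have hSnorm : ∀ d, ‖S d‖ ≤ (1 - γ * μ) * ‖d‖ := fun d => by
      simpa [S] using hQ.norm_sub_smul_apply_le hμ hL hγ.le hγL' d
    exact lipschitzWith_inv_smul_apply_sub_comp hSnorm (sub_le_self _ (mul_nonneg hγ.le hμ0)) hγ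
      (hp.lipschitzWith_one hg hγ) hT

/-- If `f(x) = ½⟪x, Qx⟫ + ⟪q, x⟫` with `Q` symmetric psd, `μ ‖x‖² ≤ ⟪Qx,x⟫ ≤ L ‖x‖²`
(`μ = λ_min(Q)`, `L = λ_max(Q)`), and `γ ∈ (0, 1/L)`, then `F_γ` is strongly convex with
modulus `min{(1-γμ)μ, (1-γL)L}` and `∇F_γ` is Lipschitz with constant `2(1-γμ)/γ`. -/
theorem fbe_quadratic_strongly_convex {n : ℕ}
    (Q : Eucl n →L[ℝ] Eucl n) (q : Eucl n) (μ L : ℝ)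
    (g : Eucl n → EReal) (γ : ℝ) (p : Eucl n → Eucl n)
    (hQsymm : ∀ u v : Eucl n, ⟪Q u, v⟫ = ⟪u, Q v⟫)
    (hμ0 : 0 ≤ μ)
    (hμ : ∀ x : Eucl n, μ * ‖x‖ ^ 2 ≤ ⟪Q x, x⟫)
    (hL : ∀ x : Eucl n, ⟪Q x, x⟫ ≤ L * ‖x‖ ^ 2)
    (hg : ProperLscConvex g)
    (hγ : 0 < γ) (hγL : γ < 1 / L)
    (hp : IsProx γ g p)
    (hfin : ∀ y, g (p y) ≠ ⊤) :
    -- with `f x = ½⟪x,Qx⟫ + ⟪q,x⟫`, `∇f x = Q x + q` and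
    -- `F_γ x = f x - (γ/2)‖∇f x‖² + g^γ(x - γ∇f x)`:
    StrongConvexOn Set.univ (min ((1 - γ * μ) * μ) ((1 - γ * L) * L))
      (fun x : Eucl n =>
        ((1 : ℝ) / 2 * ⟪x, Q x⟫ + ⟪q, x⟫) - γ / 2 * ‖Q x + q‖ ^ 2
          + ((g (p (x - γ • (Q x + q)))).toReal
              + ‖p (x - γ • (Q x + q)) - (x - γ • (Q x + q))‖ ^ 2 / (2 * γ))) ∧
    ∃ Fγ' : Eucl n → Eucl n,
      (∀ x : Eucl n, HasGradientAt
        (fun x : Eucl n =>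
          ((1 : ℝ) / 2 * ⟪x, Q x⟫ + ⟪q, x⟫) - γ / 2 * ‖Q x + q‖ ^ 2
            + ((g (p (x - γ • (Q x + q)))).toReal
                + ‖p (x - γ • (Q x + q)) - (x - γ • (Q x + q))‖ ^ 2 / (2 * γ)))
        (Fγ' x) x) ∧
      LipschitzWith (2 * (1 - γ * μ) / γ).toNNReal Fγ' :=
  fbe_quadratic_strongly_convex_general Q q μ L g γ p hQsymm hμ0 hμ hL hg hγ hγL hp
end
end

section
/- If g : R^n → R ∪ {+∞} is block separable, i.e., g(x) = Σ_i g_i(x_i) for a partition of coordinates, then every element of the B-subdifferential and of the Clarke generalized Jacobian of prox_{γg} at any point is block diagonal with respect to this partition. -/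
open scoped RealInnerProductSpace
open Filter Topology

noncomputable section

/-- B-subdifferential (limiting Jacobian) of a mapping `T` at `x`: limits of Jacobians
along sequences of differentiability points converging to `x`. -/
def Bsubdiff {n : ℕ} (T : Eucl n → Eucl n) (x : Eucl n) : Set (Eucl n →L[ℝ] Eucl n) :=
  { H | ∃ u : ℕ → Eucl n, (∀ k, DifferentiableAt ℝ T (u k)) ∧
      Tendsto u atTop (𝓝 x) ∧ Tendsto (fun k => fderiv ℝ T (u k)) atTop (𝓝 H) }

/-- Clarke generalized Jacobian: convex hull of the B-subdifferential. -/
def ClarkeJacobian {n : ℕ} (T : Eucl n → Eucl n) (x : Eucl n) : Set (Eucl n →L[ℝ] Eucl n) :=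
  convexHull ℝ (Bsubdiff T x)

/-!
Block separability of `g` makes the prox objective `u ↦ g u + ‖u - x‖² / (2γ)` block separable.
If `x` and `y` agree on a block `b`, exchanging the `b`-blocks of `p x` and `p y` therefore
leaves the sum of the objectives at `x` and at `y` unchanged; as both were minimal, the exchanged
point is again a minimizer at `x`, and by strong convexity it equals `p x`. So the `b`-block of
`p x` only depends on the `b`-block of `x`: for `π i ≠ π j` the `i`-th coordinate of `p` is
constant along `eⱼ`, and every Jacobian of `p` has vanishing `(i, j)` entry. That condition is
closed and convex, so it passes to the B-subdifferential and to its convex hull.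
-/

lemma EReal.eq_of_add_eq_add_of_le {a b c d : EReal} (h : a + b = c + d) (hca : c ≤ a)
    (hdb : d ≤ b) (hc : c ≠ ⊤) (hd : d ≠ ⊤) (hc' : c ≠ ⊥) (hd' : d ≠ ⊥) : a = c := by
  lift c to ℝ using ⟨hc, hc'⟩
  lift d to ℝ using ⟨hd, hd'⟩
  have ha : a ≠ ⊤ := by
    rintro rfl
    rw [EReal.top_add_of_ne_bot (ne_bot_of_le_ne_bot hd' hdb)] at h
    exact EReal.coe_ne_top _ (by exact_mod_cast h.symm)
  have hb : b ≠ ⊤ := by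
    rintro rfl
    rw [EReal.add_top_of_ne_bot (ne_bot_of_le_ne_bot hc' hca)] at h
    exact EReal.coe_ne_top _ (by exact_mod_cast h.symm)
  lift a to ℝ using ⟨ha, ne_bot_of_le_ne_bot hc' hca⟩
  lift b to ℝ using ⟨hb, ne_bot_of_le_ne_bot hd' hdb⟩
  norm_cast at h hca hdb ⊢
  linarith

lemma norm_midpoint_sub_sq {E : Type*} [NormedAddCommGroup E] [InnerProductSpace ℝ E]
    (u v x : E) :
    ‖(1 / 2 : ℝ) • u + (1 / 2 : ℝ) • v - x‖ ^ 2
      = ‖u - x‖ ^ 2 / 2 + ‖v - x‖ ^ 2 / 2 - ‖u - v‖ ^ 2 / 4 := by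
  have hpar := parallelogram_law_with_norm ℝ (u - x) (v - x)
  have hm : (1 / 2 : ℝ) • u + (1 / 2 : ℝ) • v - x = (1 / 2 : ℝ) • ((u - x) + (v - x)) := by
    module
  rw [hm, norm_smul, mul_pow, sub_sub_sub_cancel_right] at *
  norm_num
  linarith

def proxObjective {n : ℕ} (γ : ℝ) (g : Eucl n → EReal) (x u : Eucl n) : EReal :=
  g u + ((‖u - x‖ ^ 2 / (2 * γ) : ℝ) : EReal)

namespace IsProx

variable {n : ℕ} {γ : ℝ} {g : Eucl n → EReal} {p : Eucl n → Eucl n}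

lemma proxObjective_le (hp : IsProx γ g p) (x u : Eucl n) :
    proxObjective γ g x (p x) ≤ proxObjective γ g x u :=
  hp x u

lemma apply_ne_top_s11 (hp : IsProx γ g p) (hproper : ∃ z, g z ≠ ⊤) (x : Eucl n) :
    g (p x) ≠ ⊤ := by
  obtain ⟨z, hz⟩ := hproper
  have hlt : proxObjective γ g x (p x) < ⊤ :=
    (hp.proxObjective_le x z).trans_lt (EReal.add_lt_top hz (EReal.coe_ne_top _))
  intro htop
  simp [proxObjective, htop] at hlt

/-- The prox objective is `1/γ`-strongly convex: at the midpoint of two minimizers it would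
drop by `‖u - p x‖² / (8γ)`. -/
lemma eq_of_proxObjective_le (hp : IsProx γ g p) (hγ : 0 < γ) (hg : ProperLscConvex g)
    {x u : Eucl n} (hu : proxObjective γ g x u ≤ proxObjective γ g x (p x)) : u = p x := by
  obtain ⟨hproper, hbot, -, hconv⟩ := hg
  have hfin := hp.apply_ne_top_s11 hproper x
  set m := (1 / 2 : ℝ) • u + (1 / 2 : ℝ) • p x
  have hgu : g u ≠ ⊤ := by
    intro htop
    have hlt : proxObjective γ g x (p x) < ⊤ := EReal.add_lt_top hfin (EReal.coe_ne_top _)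
    rw [proxObjective, htop, EReal.top_add_coe] at hu
    exact hlt.not_ge hu
  have hgm : g m ≤ ((1 / 2 : ℝ) : EReal) * g u + ((1 / 2 : ℝ) : EReal) * g (p x) :=
    hconv u (p x) _ _ (by norm_num) (by norm_num) (by norm_num)
  have hpm := hp.proxObjective_le x m
  unfold proxObjective at hu hpm
  lift g u to ℝ using ⟨hgu, hbot u⟩ with α
  lift g (p x) to ℝ using ⟨hfin, hbot (p x)⟩ with β
  lift g m to ℝ using ⟨ne_top_of_le_ne_top (EReal.coe_ne_top _) hgm, hbot m⟩ with μ
  norm_cast at hu hpm hgm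
  rw [norm_midpoint_sub_sq, show ∀ a b d c : ℝ, (a / 2 + b / 2 - d / 4) / c
    = a / c / 2 + b / c / 2 - d / c / 4 by intros; ring] at hpm
  have hD : ‖u - p x‖ ^ 2 / (2 * γ) ≤ 0 := by linarith
  have hD' : ‖u - p x‖ ^ 2 ≤ 0 := by simpa using (div_le_iff₀ (by positivity)).mp hD
  simpa [sub_eq_zero] using hD'.antisymm (sq_nonneg _)

end IsProx

section Blocks

variable {n : ℕ} {ι : Type*} [DecidableEq ι] (π : Fin n → ι) (b : ι)

def blockMix (y x : Eucl n) : Eucl n :=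
  WithLp.toLp 2 fun i => if π i = b then y i else x i

variable {π b}

@[simp]
lemma blockMix_apply (y x : Eucl n) (i : Fin n) :
    blockMix π b y x i = if π i = b then y i else x i :=
  rfl

lemma norm_blockMix_sub_sq_add {x y : Eucl n} (hxy : ∀ i, π i = b → x i = y i) (x' y' : Eucl n) :
    ‖blockMix π b y' x' - x‖ ^ 2 + ‖blockMix π b x' y' - y‖ ^ 2
      = ‖x' - x‖ ^ 2 + ‖y' - y‖ ^ 2 := by
  simp only [EuclideanSpace.real_norm_sq_eq, ← Finset.sum_add_distrib, PiLp.sub_apply,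
    blockMix_apply]
  refine Finset.sum_congr rfl fun i _ => ?_
  split_ifs with hi
  · rw [hxy i hi]; ring
  · rfl

lemma apply_blockMix_add [Fintype ι] {g : Eucl n → EReal} {G : ι → Eucl n → EReal}
    (hsep : ∀ x : Eucl n, g x = ∑ b : ι, G b x)
    (hdep : ∀ b : ι, ∀ x y : Eucl n, (∀ i, π i = b → x i = y i) → G b x = G b y)
    (x y : Eucl n) :
    g (blockMix π b y x) + g (blockMix π b x y) = g y + g x := by
  simp only [hsep, ← Finset.sum_add_distrib]
  refine Finset.sum_congr rfl fun c _ => ?_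
  by_cases hc : c = b
  · subst hc
    rw [hdep c _ y fun i hi => by simp [hi], hdep c (blockMix π c x y) x fun i hi => by simp [hi]]
  · rw [hdep c _ x fun i hi => by simp [hi ▸ hc],
      hdep c (blockMix π b x y) y fun i hi => by simp [hi ▸ hc]]
    exact add_comm _ _

lemma proxObjective_blockMix_add [Fintype ι] {γ : ℝ} {g : Eucl n → EReal}
    {G : ι → Eucl n → EReal} (hsep : ∀ x : Eucl n, g x = ∑ b : ι, G b x)
    (hdep : ∀ b : ι, ∀ x y : Eucl n, (∀ i, π i = b → x i = y i) → G b x = G b y)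
    {x y : Eucl n} (hxy : ∀ i, π i = b → x i = y i) (x' y' : Eucl n) :
    proxObjective γ g x (blockMix π b y' x') + proxObjective γ g y (blockMix π b x' y')
      = proxObjective γ g x x' + proxObjective γ g y y' := by
  rw [proxObjective, proxObjective, add_add_add_comm, apply_blockMix_add hsep hdep,
    ← EReal.coe_add, ← add_div, norm_blockMix_sub_sq_add hxy, add_div, EReal.coe_add,
    add_comm (g y'), proxObjective, proxObjective, add_add_add_comm (g x')]

end Blocks

lemma IsProx.apply_eq_of_eqOn_block {n : ℕ} {ι : Type*} [Fintype ι] {γ : ℝ}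
    {g : Eucl n → EReal} {p : Eucl n → Eucl n} {π : Fin n → ι} {G : ι → Eucl n → EReal}
    (hp : IsProx γ g p) (hγ : 0 < γ) (hg : ProperLscConvex g)
    (hsep : ∀ x : Eucl n, g x = ∑ b : ι, G b x)
    (hdep : ∀ b : ι, ∀ x y : Eucl n, (∀ i, π i = b → x i = y i) → G b x = G b y)
    {b : ι} {x y : Eucl n} (hxy : ∀ i, π i = b → x i = y i) (i : Fin n) (hi : π i = b) :
    p x i = p y i := by
  classical
  -- Swapping the `b`-blocks of `p x` and `p y` preserves the total objective at `x` and `y`.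
  have hswap := proxObjective_blockMix_add (γ := γ) hsep hdep hxy (p x) (p y)
  have hfin : ∀ z, proxObjective γ g z (p z) ≠ ⊤ := fun z =>
    EReal.add_ne_top (hp.apply_ne_top_s11 hg.1 z) (EReal.coe_ne_top _)
  have hbot : ∀ z, proxObjective γ g z (p z) ≠ ⊥ := fun z =>
    EReal.add_ne_bot_iff.mpr ⟨hg.2.1 _, EReal.coe_ne_bot _⟩
  have hmix : blockMix π b (p y) (p x) = p x :=
    hp.eq_of_proxObjective_le hγ hg <| (EReal.eq_of_add_eq_add_of_le hswap
      (hp.proxObjective_le _ _) (hp.proxObjective_le _ _) (hfin x) (hfin y) (hbot x) (hbot y)).le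
  rw [← hmix, blockMix_apply, if_pos hi]

lemma fderiv_apply_eq_zero_of_forall_add_smul {𝕜 E F G : Type*} [NontriviallyNormedField 𝕜]
    [NormedAddCommGroup E] [NormedSpace 𝕜 E] [NormedAddCommGroup F] [NormedSpace 𝕜 F]
    [NormedAddCommGroup G] [NormedSpace 𝕜 G] {f : E → F} {w v : E} (ℓ : F →L[𝕜] G)
    (hf : DifferentiableAt 𝕜 f w) (hconst : ∀ t : 𝕜, ℓ (f (w + t • v)) = ℓ (f w)) :
    ℓ (fderiv 𝕜 f w v) = 0 := by
  have h : HasDerivAt (fun t : 𝕜 => ℓ (f (w + t • v))) (ℓ (fderiv 𝕜 f w v)) 0 :=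
    (ℓ.hasFDerivAt.comp w hf.hasFDerivAt).hasLineDerivAt v
  simp only [hconst] at h
  exact h.unique (hasDerivAt_const _ _)

lemma isClosed_setOf_inner_apply_eq_zero {E F : Type*} [NormedAddCommGroup E] [NormedSpace ℝ E]
    [NormedAddCommGroup F] [InnerProductSpace ℝ F] (v : E) (w : F) :
    IsClosed {A : E →L[ℝ] F | ⟪A v, w⟫ = 0} :=
  isClosed_eq (by fun_prop) continuous_const

lemma convex_setOf_inner_apply_eq_zero {E F : Type*} [NormedAddCommGroup E] [NormedSpace ℝ E]
    [NormedAddCommGroup F] [InnerProductSpace ℝ F] (v : E) (w : F) :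
    Convex ℝ {A : E →L[ℝ] F | ⟪A v, w⟫ = 0} := by
  intro A hA B hB a b _ _ _
  simp_all [inner_add_left, inner_smul_left]

section GeneralizedJacobians

variable {n : ℕ} {T : Eucl n → Eucl n} {S : Set (Eucl n →L[ℝ] Eucl n)}

lemma bsubdiff_subset (hS : IsClosed S) (hT : ∀ w, DifferentiableAt ℝ T w → fderiv ℝ T w ∈ S)
    (x : Eucl n) : Bsubdiff T x ⊆ S := by
  rintro H ⟨u, hdiff, -, hH⟩
  exact hS.mem_of_tendsto hH (Eventually.of_forall fun k => hT _ (hdiff k))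

lemma clarkeJacobian_subset (hS : IsClosed S) (hSc : Convex ℝ S)
    (hT : ∀ w, DifferentiableAt ℝ T w → fderiv ℝ T w ∈ S) (x : Eucl n) :
    ClarkeJacobian T x ⊆ S :=
  convexHull_min (bsubdiff_subset hS hT x) hSc

end GeneralizedJacobians

/-- If `g` is block separable with respect to a partition `π` of the coordinates, then every
element of the B-subdifferential and of the Clarke generalized Jacobian of `prox_{γg}` is
block diagonal with respect to this partition (entries across different blocks vanish). -/
theorem prox_separable_block_diagonal {n : ℕ} {ι : Type*} [Fintype ι]
    (g : Eucl n → EReal) (γ : ℝ) (p : Eucl n → Eucl n)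
    (π : Fin n → ι) (G : ι → Eucl n → EReal)
    (hg : ProperLscConvex g) (hγ : 0 < γ) (hp : IsProx γ g p)
    (hsep : ∀ x : Eucl n, g x = ∑ b : ι, G b x)
    (hdep : ∀ b : ι, ∀ x y : Eucl n, (∀ i, π i = b → x i = y i) → G b x = G b y)
    (x : Eucl n) :
    (∀ H ∈ Bsubdiff p x, ∀ i j : Fin n, π i ≠ π j →
      ⟪H (EuclideanSpace.single j (1 : ℝ)), EuclideanSpace.single i (1 : ℝ)⟫ = 0) ∧
    (∀ H ∈ ClarkeJacobian p x, ∀ i j : Fin n, π i ≠ π j →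
      ⟪H (EuclideanSpace.single j (1 : ℝ)), EuclideanSpace.single i (1 : ℝ)⟫ = 0) := by
  have hfderiv : ∀ i j : Fin n, π i ≠ π j → ∀ w, DifferentiableAt ℝ p w →
      fderiv ℝ p w ∈ {A : Eucl n →L[ℝ] Eucl n |
        ⟪A (EuclideanSpace.single j (1 : ℝ)), EuclideanSpace.single i (1 : ℝ)⟫ = 0} := by
    intro i j hij w hw
    rw [Set.mem_ofPred_eq, EuclideanSpace.inner_single_right, one_mul]
    refine fderiv_apply_eq_zero_of_forall_add_smul (EuclideanSpace.proj i) hw fun t => ?_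
    refine hp.apply_eq_of_eqOn_block hγ hg hsep hdep (fun k hk => ?_) i rfl
    simp [show k ≠ j by rintro rfl; exact hij hk.symm]
  exact ⟨fun H hH i j hij => bsubdiff_subset (isClosed_setOf_inner_apply_eq_zero _ _)
      (hfderiv i j hij) x hH,
    fun H hH i j hij => clarkeJacobian_subset (isClosed_setOf_inner_apply_eq_zero _ _)
      (convex_setOf_inner_apply_eq_zero _ _) (hfderiv i j hij) x hH⟩
end
end
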